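/- arXiv:2207.01403 — 3 statements merged into one kernel-verified Lean document; each statement's English description precedes it below -/
import Mathlib

section
/- Let E be a mixed-unitary quantum channel E(·) = Σ_i p_i U_i (·) U_i† with p_i ≥ 0, Σ p_i = 1, which is invertible as a linear map, and suppose its inverse has the form E⁻¹(·) = Σ_j q_j V_j (·) V_j† with unitaries V_j and real q_j. Then for any density operator ρ₀ and ρ = E(ρ₀) on a d-dimensional space, (Σ_j |q_j|)⁻² (Tr[ρ₀²]·d − 1) ≤ Tr[ρ²]·d − 1 ≤ Tr[ρ₀²]·d − 1. -/
/-!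
Write a state as `ρ = 1/d + A` with `A` traceless; then `Tr[ρ²]·d − 1 = d‖A‖²` in the Frobenius
norm. A unital map `X ↦ ∑ cᵢ Uᵢ X Uᵢ†` with unitary `Uᵢ` and real `cᵢ` sends the traceless part of
`ρ` to that of its image, and by unitary invariance of the Frobenius norm it is Lipschitz with
constant `∑ |cᵢ|`. Applied to `E` (constant `∑ pᵢ = 1`) and to `E⁻¹` (which is unital because `E` is),
this gives the two bounds.
-/

open Matrix Finset
open scoped ComplexOrder

attribute [local instance] Matrix.frobeniusSeminormedAddCommGroup
  Matrix.frobeniusNormedSpace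

theorem zpow_neg_two_mul_sq_le_sq {s a b : ℝ} (ha : 0 ≤ a) (h : a ≤ s * b) :
    s ^ (-2 : ℤ) * a ^ 2 ≤ b ^ 2 := by
  rcases eq_or_ne s 0 with rfl | hs
  · simp [sq_nonneg]
  · rw [_root_.zpow_neg, zpow_two, inv_mul_le_iff₀ (mul_self_pos.2 hs)]
    nlinarith [pow_le_pow_left₀ ha h 2]

namespace Matrix

variable {n ι : Type*} [Fintype n] [Fintype ι]

theorem frobenius_norm_sq_eq_re_trace (X : Matrix n n ℂ) :
    ‖X‖ ^ 2 = (trace (Xᴴ * X)).re := by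
  rw [frobenius_norm_def, ← Real.rpow_natCast, ← Real.rpow_mul (by positivity)]
  norm_num
  rw [trace, Complex.re_sum, Finset.sum_comm]
  simp [mul_apply, Complex.re_sum, ← Complex.normSq_eq_norm_sq, Complex.normSq_apply]

variable [DecidableEq n]

theorem frobenius_norm_unitary_conj {U : Matrix n n ℂ} (hU : U ∈ unitaryGroup n ℂ)
    (X : Matrix n n ℂ) : ‖U * X * Uᴴ‖ = ‖X‖ := by
  have hUU : Uᴴ * U = 1 := mem_unitaryGroup_iff'.mp hU
  refine (sq_eq_sq₀ (norm_nonneg _) (norm_nonneg _)).mp ?_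
  simp only [frobenius_norm_sq_eq_re_trace, conjTranspose_mul, conjTranspose_conjTranspose,
    mul_assoc]
  rw [← mul_assoc Uᴴ U, hUU, one_mul, trace_mul_comm U, mul_assoc, mul_assoc, hUU, mul_one]

theorem re_trace_mul_self_mul_card_sub_one {X : Matrix n n ℂ} (hX : X.IsHermitian)
    (htr : X.trace = 1) :
    (trace (X * X)).re * Fintype.card n - 1
      = Fintype.card n * ‖X - ((Fintype.card n : ℂ)⁻¹) • 1‖ ^ 2 := by
  have hn : (Fintype.card n : ℂ) ≠ 0 := by
    intro h
    simp_all [trace, Fintype.card_eq_zero_iff.mp (by exact_mod_cast h)]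
  set N : ℂ := (Fintype.card n : ℂ)
  have hH : (X - N⁻¹ • 1)ᴴ = X - N⁻¹ • 1 := by simp [N, hX.eq]
  have hscaled : trace ((X - N⁻¹ • 1) * (X - N⁻¹ • 1)) * N = trace (X * X) * N - 1 := by
    simp only [sub_mul, mul_sub, Matrix.smul_mul, Matrix.mul_smul, one_mul, mul_one, smul_smul,
      trace_sub, trace_smul, trace_one, htr, smul_eq_mul]
    field_simp
    ring
  have hscaled_re := congrArg Complex.re hscaled
  simp only [N, Complex.mul_re, Complex.natCast_re, Complex.natCast_im, mul_zero, sub_zero,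
    Complex.sub_re, Complex.one_re] at hscaled_re
  rw [frobenius_norm_sq_eq_re_trace, hH]
  linarith

def mixedUnitary (c : ι → ℝ) (U : ι → Matrix n n ℂ) : Matrix n n ℂ →ₗ[ℂ] Matrix n n ℂ :=
  ∑ i, (c i : ℂ) • (LinearMap.mulLeft ℂ (U i) ∘ₗ LinearMap.mulRight ℂ (U i)ᴴ)

variable {c : ι → ℝ} {U : ι → Matrix n n ℂ}

theorem mixedUnitary_apply (X : Matrix n n ℂ) :
    mixedUnitary c U X = ∑ i, (c i : ℂ) • (U i * X * (U i)ᴴ) := by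
  simp [mixedUnitary, mul_assoc]

theorem mixedUnitary_one (hU : ∀ i, U i ∈ unitaryGroup n ℂ) :
    mixedUnitary c U 1 = ((∑ i, c i : ℝ) : ℂ) • 1 := by
  have hUU (i : ι) : U i * (U i)ᴴ = 1 := mem_unitaryGroup_iff.mp (hU i)
  simp [mixedUnitary_apply, hUU, Finset.sum_smul]

theorem trace_mixedUnitary (hU : ∀ i, U i ∈ unitaryGroup n ℂ) (X : Matrix n n ℂ) :
    trace (mixedUnitary c U X) = (∑ i, c i : ℝ) * trace X := by
  have hUU (i : ι) : (U i)ᴴ * U i = 1 := mem_unitaryGroup_iff'.mp (hU i)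
  simp [mixedUnitary_apply, trace_sum, trace_mul_cycle (U _), hUU, Finset.sum_mul]

theorem IsHermitian.mixedUnitary {X : Matrix n n ℂ} (hX : X.IsHermitian) :
    (Matrix.mixedUnitary c U X).IsHermitian := by
  simp [IsHermitian, mixedUnitary_apply, conjTranspose_sum, hX.eq, mul_assoc]

theorem norm_mixedUnitary_le (hU : ∀ i, U i ∈ unitaryGroup n ℂ) (X : Matrix n n ℂ) :
    ‖mixedUnitary c U X‖ ≤ (∑ i, |c i|) * ‖X‖ := by
  rw [mixedUnitary_apply, Finset.sum_mul]
  refine (norm_sum_le _ _).trans (Finset.sum_le_sum fun i _ => ?_)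
  rw [norm_smul, frobenius_norm_unitary_conj (hU i), Complex.norm_real, Real.norm_eq_abs]

end Matrix

theorem mixed_unitary_purity_two_sided_general (d : ℕ) {ι κ : Type*} [Fintype ι] [Fintype κ]
    (p : ι → ℝ) (U : ι → Matrix (Fin d) (Fin d) ℂ)
    (q : κ → ℝ) (V : κ → Matrix (Fin d) (Fin d) ℂ)
    (hU : ∀ i, U i ∈ Matrix.unitaryGroup (Fin d) ℂ)
    (hV : ∀ j, V j ∈ Matrix.unitaryGroup (Fin d) ℂ)
    (hp : ∀ i, 0 ≤ p i) (hp1 : ∑ i, p i = 1)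
    (E Einv : Matrix (Fin d) (Fin d) ℂ → Matrix (Fin d) (Fin d) ℂ)
    (hE : ∀ X, E X = ∑ i, (p i : ℂ) • (U i * X * (U i)ᴴ))
    (hEinv : ∀ X, Einv X = ∑ j, (q j : ℂ) • (V j * X * (V j)ᴴ))
    (hinv₁ : ∀ X, Einv (E X) = X)
    (ρ₀ ρ : Matrix (Fin d) (Fin d) ℂ)
    (h0 : ρ₀.PosSemidef) (htr : ρ₀.trace = 1)
    (hρ : ρ = E ρ₀) :
    (∑ j, |q j|) ^ (-2 : ℤ) * ((Matrix.trace (ρ₀ * ρ₀)).re * d - 1)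
        ≤ (Matrix.trace (ρ * ρ)).re * d - 1
      ∧ (Matrix.trace (ρ * ρ)).re * d - 1 ≤ (Matrix.trace (ρ₀ * ρ₀)).re * d - 1 := by
  obtain rfl : E = mixedUnitary p U := funext fun X => by rw [hE, mixedUnitary_apply]
  obtain rfl : Einv = mixedUnitary q V := funext fun X => by rw [hEinv, mixedUnitary_apply]
  subst hρ
  have hE1 : mixedUnitary p U 1 = 1 := by
    rw [mixedUnitary_one hU, hp1, Complex.ofReal_one, one_smul]
  have hEinv1 : mixedUnitary q V 1 = 1 := by simpa only [hE1] using hinv₁ 1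
  have hρ_herm := h0.1.mixedUnitary (c := p) (U := U)
  have hρ_tr : (mixedUnitary p U ρ₀).trace = 1 := by
    rw [trace_mixedUnitary hU, hp1, htr, Complex.ofReal_one, one_mul]
  have hpur₀ := re_trace_mul_self_mul_card_sub_one h0.1 htr
  have hpur := re_trace_mul_self_mul_card_sub_one hρ_herm hρ_tr
  rw [Fintype.card_fin] at hpur₀ hpur
  rw [hpur₀, hpur]
  set c : Matrix (Fin d) (Fin d) ℂ := ((d : ℂ)⁻¹) • 1
  have hfwd : mixedUnitary p U ρ₀ - c = mixedUnitary p U (ρ₀ - c) := by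
    rw [map_sub, map_smul, hE1]
  have hbwd : ρ₀ - c = mixedUnitary q V (mixedUnitary p U ρ₀ - c) := by
    rw [map_sub, map_smul, hinv₁, hEinv1]
  constructor
  · rw [mul_left_comm]
    gcongr
    exact zpow_neg_two_mul_sq_le_sq (norm_nonneg _) (hbwd ▸ norm_mixedUnitary_le hV _)
  · gcongr
    calc ‖mixedUnitary p U ρ₀ - c‖ ≤ (∑ i, |p i|) * ‖ρ₀ - c‖ :=
          hfwd ▸ norm_mixedUnitary_le hU _
      _ = ‖ρ₀ - c‖ := by simp_rw [abs_of_nonneg (hp _), hp1, one_mul]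

/-- For a mixed-unitary channel E(·) = Σ_i p_i U_i (·) U_i† (p_i ≥ 0, Σ p_i = 1),
invertible as a linear map with inverse of the mixed-unitary form
E⁻¹(·) = Σ_j q_j V_j (·) V_j†, the purities of ρ₀ and ρ = E(ρ₀) satisfy
(Σ_j |q_j|)⁻² (Tr[ρ₀²]·d − 1) ≤ Tr[ρ²]·d − 1 ≤ Tr[ρ₀²]·d − 1. -/
theorem mixed_unitary_purity_two_sided (d : ℕ) {ι κ : Type*} [Fintype ι] [Fintype κ]
    (p : ι → ℝ) (U : ι → Matrix (Fin d) (Fin d) ℂ)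
    (q : κ → ℝ) (V : κ → Matrix (Fin d) (Fin d) ℂ)
    (hU : ∀ i, U i ∈ Matrix.unitaryGroup (Fin d) ℂ)
    (hV : ∀ j, V j ∈ Matrix.unitaryGroup (Fin d) ℂ)
    (hp : ∀ i, 0 ≤ p i) (hp1 : ∑ i, p i = 1)
    (E Einv : Matrix (Fin d) (Fin d) ℂ → Matrix (Fin d) (Fin d) ℂ)
    (hE : ∀ X, E X = ∑ i, (p i : ℂ) • (U i * X * (U i)ᴴ))
    (hEinv : ∀ X, Einv X = ∑ j, (q j : ℂ) • (V j * X * (V j)ᴴ))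
    (hinv₁ : ∀ X, Einv (E X) = X) (hinv₂ : ∀ X, E (Einv X) = X)
    (ρ₀ ρ : Matrix (Fin d) (Fin d) ℂ)
    (h0 : ρ₀.PosSemidef) (htr : ρ₀.trace = 1)
    (hρ : ρ = E ρ₀) :
    (∑ j, |q j|) ^ (-2 : ℤ) * ((Matrix.trace (ρ₀ * ρ₀)).re * d - 1)
        ≤ (Matrix.trace (ρ * ρ)).re * d - 1
      ∧ (Matrix.trace (ρ * ρ)).re * d - 1 ≤ (Matrix.trace (ρ₀ * ρ₀)).re * d - 1 :=
  mixed_unitary_purity_two_sided_general d p U q V hU hV hp hp1 E Einv hE hEinv hinv₁ ρ₀ ρ h0 htr hρ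
end

section
/- Under the conditions of the separable-map negativity bound: if a noise channel E and its inverse E⁻¹ both admit decompositions into real combinations of product channels, and η(E⁻¹) denotes log₂ of the minimal Σ|q_i| over decompositions E⁻¹ = Σ q_i T_i^A ⊗ T_i^B, then for any bipartite density operator ρ₀ and ρ = E(ρ₀): E_N(ρ₀) − η(E⁻¹) ≤ E_N(ρ) ≤ E_N(ρ₀), where E_N(σ) = log₂‖σ^{T_B}‖₁ is the logarithmic negativity. -/
open Matrix
open scoped ComplexOrder

/-- The square root `Matrix.PosSemidef.sqrt` of the older Mathlib, with its old definition. -/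
noncomputable def posSemidefSqrt {n : Type*} [Fintype n] [DecidableEq n]
    {A : Matrix n n ℂ} (hA : A.PosSemidef) : Matrix n n ℂ :=
  hA.1.eigenvectorUnitary.1 * diagonal ((↑) ∘ (√·) ∘ hA.1.eigenvalues) *
    (star hA.1.eigenvectorUnitary : Matrix n n ℂ)

/-- Trace norm ‖A‖₁ = Tr √(AᴴA). -/
noncomputable def traceNorm {n : Type*} [Fintype n] [DecidableEq n]
    (A : Matrix n n ℂ) : ℝ :=
  ((posSemidefSqrt (Matrix.posSemidef_conjTranspose_mul_self A)).trace).re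

/-- The extension (id_m ⊗ T) of a map on matrices, acting blockwise. -/
def matExt {m n : Type*} [Fintype n] [DecidableEq n]
    (T : Matrix n n ℂ →ₗ[ℂ] Matrix n n ℂ)
    (M : Matrix (m × n) (m × n) ℂ) : Matrix (m × n) (m × n) ℂ :=
  Matrix.of fun p q => T (Matrix.of fun a b => M (p.1, a) (q.1, b)) p.2 q.2

/-- A linear map on matrices is CPTP if it preserves traces and all its
ancilla extensions (id ⊗ T) preserve positive semidefiniteness. -/
def IsCPTP {n : Type*} [Fintype n] [DecidableEq n]
    (T : Matrix n n ℂ →ₗ[ℂ] Matrix n n ℂ) : Prop :=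
  (∀ X : Matrix n n ℂ, (T X).trace = X.trace) ∧
  ∀ (m : ℕ) (M : Matrix (Fin m × n) (Fin m × n) ℂ), M.PosSemidef → (matExt T M).PosSemidef

/-- Action of a map on the A factor of a bipartite system. -/
def applyA {a b : Type*} [Fintype a] [DecidableEq a] [Fintype b] [DecidableEq b]
    (TA : Matrix a a ℂ →ₗ[ℂ] Matrix a a ℂ)
    (X : Matrix (a × b) (a × b) ℂ) : Matrix (a × b) (a × b) ℂ :=
  Matrix.of fun p q => TA (Matrix.of fun i j => X (i, p.2) (j, q.2)) p.1 q.1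

/-- Action of a map on the B factor of a bipartite system. -/
def applyB {a b : Type*} [Fintype a] [DecidableEq a] [Fintype b] [DecidableEq b]
    (TB : Matrix b b ℂ →ₗ[ℂ] Matrix b b ℂ)
    (X : Matrix (a × b) (a × b) ℂ) : Matrix (a × b) (a × b) ℂ :=
  Matrix.of fun p q => TB (Matrix.of fun k l => X (p.1, k) (q.1, l)) p.2 q.2

/-- The product map T^A ⊗ T^B on a bipartite system. -/
def prodMap {a b : Type*} [Fintype a] [DecidableEq a] [Fintype b] [DecidableEq b]
    (TA : Matrix a a ℂ →ₗ[ℂ] Matrix a a ℂ) (TB : Matrix b b ℂ →ₗ[ℂ] Matrix b b ℂ)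
    (X : Matrix (a × b) (a × b) ℂ) : Matrix (a × b) (a × b) ℂ :=
  applyA TA (applyB TB X)

/-- Partial transpose over the B factor. -/
def ptB {a b : Type*} (M : Matrix (a × b) (a × b) ℂ) : Matrix (a × b) (a × b) ℂ :=
  Matrix.of fun p q => M (p.1, q.2) (q.1, p.2)

/-!
For Hermitian `H`, `traceNorm H = min {tr A + tr B | H = A - B, A, B ≥ 0}`: the minimum is attained
at the positive and negative parts of `H`, and for any such splitting the sign matrix `S = sgn H`
satisfies `-1 ≤ S ≤ 1`, so `traceNorm H = tr (S A) - tr (S B) ≤ tr A + tr B`.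

The partial transpose turns `T^A ⊗ T^B` into `T^A ⊗ (T^B)ᵀ`, where `(T^B)ᵀ X = (T^B Xᵀ)ᵀ` is again
CPTP. Splitting `ρ^{T_B}` into its positive and negative parts and each `qᵢ` into `qᵢ⁺ - qᵢ⁻`
therefore shows that `Σ qᵢ T_i^A ⊗ T_i^B` increases `traceNorm (ρ^{T_B})` by at most the factor
`Σ |qᵢ|`. For `E` this factor is `1`, giving the upper bound; for `E⁻¹` applied to `ρ = E ρ₀` it
gives `traceNorm (ρ₀^{T_B}) ≤ Σ |qᵢ| · traceNorm (ρ^{T_B})` for every decomposition, hence the lower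
bound after passing to the infimum.
-/

open scoped MatrixOrder

section TraceNorm
variable {n : Type*} [Fintype n]

lemma Matrix.PosSemidef.re_trace_nonneg {A : Matrix n n ℂ} (hA : A.PosSemidef) :
    0 ≤ A.trace.re :=
  (Complex.nonneg_iff.mp hA.trace_nonneg).1

variable [DecidableEq n]

lemma Matrix.continuousOn_spectrum (A : Matrix n n ℂ) (f : ℝ → ℝ) :
    ContinuousOn f (spectrum ℝ A) :=
  A.finite_real_spectrum.continuousOn f

lemma Matrix.posSemidef_cfc {A : Matrix n n ℂ} {f : ℝ → ℝ} (hf : ∀ x, 0 ≤ f x) :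
    (cfc f A).PosSemidef :=
  nonneg_iff_posSemidef.mp (cfc_nonneg fun x _ => hf x)

lemma posSemidefSqrt_eq_cfc {A : Matrix n n ℂ} (hA : A.PosSemidef) :
    posSemidefSqrt hA = cfc Real.sqrt A := by
  rw [hA.1.cfc_eq, IsHermitian.cfc, Unitary.conjStarAlgAut_apply]
  rfl

lemma traceNorm_nonneg (A : Matrix n n ℂ) : 0 ≤ traceNorm A := by
  rw [traceNorm, posSemidefSqrt_eq_cfc]
  exact (posSemidef_cfc Real.sqrt_nonneg).re_trace_nonneg

lemma Matrix.IsHermitian.traceNorm_eq {H : Matrix n n ℂ} (hH : H.IsHermitian) :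
    traceNorm H = (cfc (fun x : ℝ => |x|) H).trace.re := by
  have hsq : Hᴴ * H = cfc (fun x : ℝ => x * x) H := by
    rw [cfc_mul _ _ H, cfc_id' ℝ H, hH.eq]
  rw [traceNorm, posSemidefSqrt_eq_cfc, hsq, ← cfc_comp Real.sqrt (fun x : ℝ => x * x) H]
  simp only [Function.comp_def, Real.sqrt_mul_self_eq_abs]

lemma Matrix.re_trace_cfc_mul_nonneg {H A : Matrix n n ℂ} {f : ℝ → ℝ} (hf : ∀ x, 0 ≤ f x)
    (hA : A.PosSemidef) : 0 ≤ (cfc f H * A).trace.re := by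
  set C := cfc (fun x => √(f x)) H
  have hC : Cᴴ = C := (cfc_predicate _ H : IsSelfAdjoint C)
  have hCC : cfc f H = C * C := by
    rw [← cfc_mul _ _ H (H.continuousOn_spectrum _) (H.continuousOn_spectrum _)]
    simp only [Real.mul_self_sqrt (hf _)]
  have hCAC := hA.mul_mul_conjTranspose_same C
  rw [hC] at hCAC
  rw [hCC, Matrix.mul_assoc, trace_mul_comm]
  exact hCAC.re_trace_nonneg

lemma Matrix.abs_re_trace_cfc_mul_le {H A : Matrix n n ℂ} (hH : H.IsHermitian) {f : ℝ → ℝ}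
    (hf : ∀ x, |f x| ≤ 1) (hA : A.PosSemidef) : |(cfc f H * A).trace.re| ≤ A.trace.re := by
  have hsub := re_trace_cfc_mul_nonneg (H := H) (fun x => sub_nonneg.mpr (abs_le.mp (hf x)).2) hA
  have hadd := re_trace_cfc_mul_nonneg (H := H)
    (fun x => neg_le_iff_add_nonneg'.mp (abs_le.mp (hf x)).1) hA
  rw [cfc_sub _ _ H (H.continuousOn_spectrum _) (H.continuousOn_spectrum _),
    cfc_const_one ℝ H hH.isSelfAdjoint, Matrix.sub_mul, Matrix.one_mul, trace_sub,
    Complex.sub_re] at hsub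
  rw [cfc_add H _ _ (H.continuousOn_spectrum _) (H.continuousOn_spectrum _),
    cfc_const_one ℝ H hH.isSelfAdjoint, Matrix.add_mul, Matrix.one_mul, trace_add,
    Complex.add_re] at hadd
  exact abs_le.mpr ⟨by linarith, by linarith⟩

lemma traceNorm_sub_le {A B : Matrix n n ℂ} (hA : A.PosSemidef) (hB : B.PosSemidef) :
    traceNorm (A - B) ≤ A.trace.re + B.trace.re := by
  have hH : (A - B).IsHermitian := hA.1.sub hB.1
  set S := cfc (fun x : ℝ => (SignType.sign x : ℝ)) (A - B)
  have hS : S * (A - B) = cfc (fun x : ℝ => |x|) (A - B) := calc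
    S * (A - B) = S * cfc (fun x : ℝ => x) (A - B) := by
      rw [cfc_id' ℝ (A - B) hH.isSelfAdjoint]
    _ = cfc (fun x : ℝ => (SignType.sign x : ℝ) * x) (A - B) :=
      (cfc_mul _ _ _ ((A - B).continuousOn_spectrum _) ((A - B).continuousOn_spectrum _)).symm
    _ = cfc (fun x : ℝ => |x|) (A - B) := by simp only [sign_mul_self]
  have hS_le_one (x : ℝ) : |(SignType.sign x : ℝ)| ≤ 1 := by
    rcases lt_trichotomy x 0 with hx | rfl | hx <;> simp [*]
  have hSA := abs_re_trace_cfc_mul_le hH hS_le_one hA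
  have hSB := abs_re_trace_cfc_mul_le hH hS_le_one hB
  rw [hH.traceNorm_eq, ← hS, Matrix.mul_sub, trace_sub, Complex.sub_re]
  linarith [le_abs_self (S * A).trace.re, neg_abs_le (S * B).trace.re]

lemma Matrix.IsHermitian.exists_posSemidef_sub_traceNorm_eq {H : Matrix n n ℂ}
    (hH : H.IsHermitian) :
    ∃ P N : Matrix n n ℂ, P.PosSemidef ∧ N.PosSemidef ∧ H = P - N ∧
      P.trace.re + N.trace.re = traceNorm H := by
  refine ⟨cfc (fun x : ℝ => x⁺) H, cfc (fun x : ℝ => x⁻) H, posSemidef_cfc posPart_nonneg,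
    posSemidef_cfc negPart_nonneg, ?_, ?_⟩
  · rw [← cfc_sub _ _ H (H.continuousOn_spectrum _) (H.continuousOn_spectrum _)]
    simp only [posPart_sub_negPart]
    exact (cfc_id' ℝ H hH.isSelfAdjoint).symm
  · rw [← Complex.add_re, ← trace_add, ← cfc_add H _ _ (H.continuousOn_spectrum _)
      (H.continuousOn_spectrum _), hH.traceNorm_eq]
    simp only [posPart_add_negPart]

lemma Matrix.IsHermitian.abs_re_trace_le_traceNorm {H : Matrix n n ℂ} (hH : H.IsHermitian) :
    |H.trace.re| ≤ traceNorm H := by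
  obtain ⟨P, N, hP, hN, rfl, htr⟩ := hH.exists_posSemidef_sub_traceNorm_eq
  rw [trace_sub, Complex.sub_re, ← htr, abs_le]
  constructor <;> linarith [hP.re_trace_nonneg, hN.re_trace_nonneg]

lemma traceNorm_sum_smul_le {m ι : Type*} [Fintype m] [DecidableEq m] [Fintype ι]
    (Ψ : ι → Matrix n n ℂ →ₗ[ℂ] Matrix m m ℂ)
    (hΨ_pos : ∀ i X, X.PosSemidef → (Ψ i X).PosSemidef)
    (hΨ_tr : ∀ i X, (Ψ i X).trace = X.trace)
    (q : ι → ℝ) {H : Matrix n n ℂ} (hH : H.IsHermitian) :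
    traceNorm (∑ i, (q i : ℂ) • Ψ i H) ≤ (∑ i, |q i|) * traceNorm H := by
  obtain ⟨P, N, hP, hN, rfl, htr⟩ := hH.exists_posSemidef_sub_traceNorm_eq
  have hpsd (i) {X Y : Matrix n n ℂ} (hX : X.PosSemidef) (hY : Y.PosSemidef) :
      ((q i)⁺ • Ψ i X + (q i)⁻ • Ψ i Y).PosSemidef :=
    ((hΨ_pos i X hX).smul (posPart_nonneg (q i))).add
      ((hΨ_pos i Y hY).smul (negPart_nonneg (q i)))
  have hre_trace (i) (X Y : Matrix n n ℂ) :
      ((q i)⁺ • Ψ i X + (q i)⁻ • Ψ i Y).trace.re =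
        (q i)⁺ * X.trace.re + (q i)⁻ * Y.trace.re := by
    simp [hΨ_tr]
  have hsplit : ∑ i, (q i : ℂ) • Ψ i (P - N) =
      (∑ i, ((q i)⁺ • Ψ i P + (q i)⁻ • Ψ i N)) - ∑ i, ((q i)⁺ • Ψ i N + (q i)⁻ • Ψ i P) := by
    rw [← Finset.sum_sub_distrib]
    refine Finset.sum_congr rfl fun i _ => ?_
    conv_lhs => rw [map_sub, ← posPart_sub_negPart (q i)]
    push_cast
    module
  rw [hsplit, ← htr, Finset.sum_mul]
  refine (traceNorm_sub_le (posSemidef_sum _ fun i _ => hpsd i hP hN)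
    (posSemidef_sum _ fun i _ => hpsd i hN hP)).trans_eq ?_
  simp only [trace_sum, Complex.re_sum, hre_trace, ← Finset.sum_add_distrib,
    ← posPart_add_negPart]
  exact Finset.sum_congr rfl fun i _ => by ring

end TraceNorm

section Channel
variable {m n : Type*}

def transposeConj (T : Matrix n n ℂ →ₗ[ℂ] Matrix n n ℂ) : Matrix n n ℂ →ₗ[ℂ] Matrix n n ℂ :=
  (transposeLinearEquiv n n ℂ ℂ).conj T

lemma transposeConj_apply (T : Matrix n n ℂ →ₗ[ℂ] Matrix n n ℂ) (X : Matrix n n ℂ) :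
    transposeConj T X = (T Xᵀ)ᵀ :=
  rfl

variable [Fintype n] [DecidableEq n] {T : Matrix n n ℂ →ₗ[ℂ] Matrix n n ℂ}

def matExtLinearMap (T : Matrix n n ℂ →ₗ[ℂ] Matrix n n ℂ) :
    Matrix (m × n) (m × n) ℂ →ₗ[ℂ] Matrix (m × n) (m × n) ℂ where
  toFun := matExt T
  map_add' M N := by ext p q; exact congrFun₂ (map_add T _ _) p.2 q.2
  map_smul' c M := by ext p q; exact congrFun₂ (map_smul T c _) p.2 q.2

lemma matExt_trace [Fintype m] (hT : ∀ X, (T X).trace = X.trace)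
    (M : Matrix (m × n) (m × n) ℂ) : (matExt T M).trace = M.trace := by
  simp only [trace, Fintype.sum_prod_type]
  exact Finset.sum_congr rfl fun x _ => hT (Matrix.of fun i j => M (x, i) (x, j))

lemma IsCPTP.posSemidef_matExt [Fintype m] (hT : IsCPTP T) {M : Matrix (m × n) (m × n) ℂ}
    (hM : M.PosSemidef) : (matExt T M).PosSemidef := by
  let e := (Fintype.equivFin m).symm.prodCongr (Equiv.refl n)
  exact (posSemidef_submatrix_equiv e).mp (hT.2 _ _ (hM.submatrix e))

lemma matExt_transposeConj (T : Matrix n n ℂ →ₗ[ℂ] Matrix n n ℂ) (M : Matrix (m × n) (m × n) ℂ) :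
    matExt (transposeConj T) M = (matExt T Mᵀ)ᵀ :=
  rfl

lemma IsCPTP.transposeConj (hT : IsCPTP T) : IsCPTP (transposeConj T) :=
  ⟨fun X => by rw [transposeConj_apply, trace_transpose, hT.1, trace_transpose],
    fun _ M hM => by rw [matExt_transposeConj]; exact (hT.2 _ _ hM.transpose).transpose⟩

end Channel

lemma Matrix.trace_submatrix_swap {α β : Type*} [Fintype α] [Fintype β]
    (M : Matrix (α × β) (α × β) ℂ) : (M.submatrix Prod.swap Prod.swap).trace = M.trace :=
  (Equiv.prodComm β α).sum_comp fun p => M p p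

section Bipartite
variable {a b : Type*} [Fintype a] [DecidableEq a] [Fintype b] [DecidableEq b]
  {TA : Matrix a a ℂ →ₗ[ℂ] Matrix a a ℂ} {TB : Matrix b b ℂ →ₗ[ℂ] Matrix b b ℂ}

lemma applyA_eq_matExt (TA : Matrix a a ℂ →ₗ[ℂ] Matrix a a ℂ) (X : Matrix (a × b) (a × b) ℂ) :
    applyA TA X = (matExt TA (X.submatrix Prod.swap Prod.swap)).submatrix Prod.swap Prod.swap :=
  rfl

lemma IsCPTP.posSemidef_applyA (hT : IsCPTP TA) {X : Matrix (a × b) (a × b) ℂ}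
    (hX : X.PosSemidef) : (applyA TA X).PosSemidef :=
  (hT.posSemidef_matExt (hX.submatrix Prod.swap)).submatrix Prod.swap

lemma applyA_trace (hT : ∀ X, (TA X).trace = X.trace) (X : Matrix (a × b) (a × b) ℂ) :
    (applyA TA X).trace = X.trace := by
  rw [applyA_eq_matExt, trace_submatrix_swap, matExt_trace hT, trace_submatrix_swap]

-- `applyB TB` is `matExt TB` by definition.
lemma prodMap_trace (hA : ∀ X, (TA X).trace = X.trace) (hB : ∀ X, (TB X).trace = X.trace)
    (X : Matrix (a × b) (a × b) ℂ) : (prodMap TA TB X).trace = X.trace :=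
  (applyA_trace hA _).trans (matExt_trace hB X)

lemma IsCPTP.posSemidef_prodMap (hA : IsCPTP TA) (hB : IsCPTP TB)
    {X : Matrix (a × b) (a × b) ℂ} (hX : X.PosSemidef) : (prodMap TA TB X).PosSemidef :=
  hA.posSemidef_applyA (hB.posSemidef_matExt hX)

def prodMapLinearMap (TA : Matrix a a ℂ →ₗ[ℂ] Matrix a a ℂ)
    (TB : Matrix b b ℂ →ₗ[ℂ] Matrix b b ℂ) :
    Matrix (a × b) (a × b) ℂ →ₗ[ℂ] Matrix (a × b) (a × b) ℂ :=
  (reindexLinearEquiv ℂ ℂ (.prodComm b a) (.prodComm b a)).toLinearMap ∘ₗ matExtLinearMap TA ∘ₗ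
    (reindexLinearEquiv ℂ ℂ (.prodComm a b) (.prodComm a b)).toLinearMap ∘ₗ matExtLinearMap TB

lemma prodMapLinearMap_apply (TA : Matrix a a ℂ →ₗ[ℂ] Matrix a a ℂ)
    (TB : Matrix b b ℂ →ₗ[ℂ] Matrix b b ℂ) (X : Matrix (a × b) (a × b) ℂ) :
    prodMapLinearMap TA TB X = prodMap TA TB X :=
  rfl

end Bipartite

section PartialTranspose
variable {a b : Type*}

lemma ptB_sum {ι : Type*} (s : Finset ι) (X : ι → Matrix (a × b) (a × b) ℂ) :
    ptB (∑ i ∈ s, X i) = ∑ i ∈ s, ptB (X i) := by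
  ext p q
  simp only [ptB, of_apply, Matrix.sum_apply]

lemma ptB_smul (c : ℂ) (X : Matrix (a × b) (a × b) ℂ) : ptB (c • X) = c • ptB X :=
  rfl

lemma ptB_trace [Fintype a] [Fintype b] (X : Matrix (a × b) (a × b) ℂ) :
    (ptB X).trace = X.trace :=
  rfl

lemma Matrix.IsHermitian.ptB {X : Matrix (a × b) (a × b) ℂ} (hX : X.IsHermitian) :
    (ptB X).IsHermitian := by
  ext p q
  exact congrFun₂ hX (p.1, q.2) (q.1, p.2)

lemma ptB_prodMap [Fintype a] [DecidableEq a] [Fintype b] [DecidableEq b]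
    (TA : Matrix a a ℂ →ₗ[ℂ] Matrix a a ℂ) (TB : Matrix b b ℂ →ₗ[ℂ] Matrix b b ℂ)
    (X : Matrix (a × b) (a × b) ℂ) :
    ptB (prodMap TA TB X) = prodMap TA (transposeConj TB) (ptB X) :=
  rfl

lemma one_le_traceNorm_ptB [Fintype a] [DecidableEq a] [Fintype b] [DecidableEq b]
    {ρ : Matrix (a × b) (a × b) ℂ} (hρ : ρ.PosSemidef) (htr : ρ.trace = 1) :
    1 ≤ traceNorm (ptB ρ) := by
  have h := hρ.1.ptB.abs_re_trace_le_traceNorm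
  rwa [ptB_trace, htr, Complex.one_re, abs_one] at h

end PartialTranspose

section ProductDecomposition
variable {a b ι : Type*} [Fintype a] [DecidableEq a] [Fintype b] [DecidableEq b] [Fintype ι]
  {TA : ι → Matrix a a ℂ →ₗ[ℂ] Matrix a a ℂ} {TB : ι → Matrix b b ℂ →ₗ[ℂ] Matrix b b ℂ}

lemma posSemidef_sum_smul_prodMap {p : ι → ℝ} (hp : ∀ i, 0 ≤ p i)
    (hT : ∀ i, IsCPTP (TA i) ∧ IsCPTP (TB i)) {X : Matrix (a × b) (a × b) ℂ}
    (hX : X.PosSemidef) : (∑ i, (p i : ℂ) • prodMap (TA i) (TB i) X).PosSemidef :=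
  posSemidef_sum _ fun i _ =>
    ((hT i).1.posSemidef_prodMap (hT i).2 hX).smul (Complex.zero_le_real.mpr (hp i))

lemma traceNorm_ptB_sum_smul_prodMap_le (q : ι → ℝ) (hT : ∀ i, IsCPTP (TA i) ∧ IsCPTP (TB i))
    {X : Matrix (a × b) (a × b) ℂ} (hX : X.IsHermitian) :
    traceNorm (ptB (∑ i, (q i : ℂ) • prodMap (TA i) (TB i) X)) ≤
      (∑ i, |q i|) * traceNorm (ptB X) := by
  simp only [ptB_sum, ptB_smul, ptB_prodMap]
  simp only [← prodMapLinearMap_apply]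
  exact traceNorm_sum_smul_le (fun i => prodMapLinearMap (TA i) (transposeConj (TB i)))
    (fun i _ hY => (hT i).1.posSemidef_prodMap (hT i).2.transposeConj hY)
    (fun i => prodMap_trace (hT i).1.1 (hT i).2.transposeConj.1) q hX.ptB

end ProductDecomposition

lemma Real.logb_sub_logb_sInf_le {b x y : ℝ} (hb : 1 < b) {S : Set ℝ} (hS : S.Nonempty)
    (hx : 0 < x) (hy : 0 < y) (h : ∀ s ∈ S, x ≤ s * y) :
    logb b x - logb b (sInf S) ≤ logb b y := by
  have hxy : x / y ≤ sInf S := le_csInf hS fun s hs => (div_le_iff₀ hy).mpr (h s hs)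
  calc logb b x - logb b (sInf S) ≤ logb b x - logb b (x / y) := by gcongr
    _ = logb b y := by rw [logb_div hx.ne' hy.ne']; ring

/-- If a noise channel E admits a CPTP product decomposition and its inverse E⁻¹
admits decompositions into real combinations of product channels, with
η(E⁻¹) = log₂ of the minimal Σ|qᵢ| over such decompositions, then for any bipartite density
operator ρ₀ and ρ = E(ρ₀): E_N(ρ₀) − η(E⁻¹) ≤ E_N(ρ) ≤ E_N(ρ₀), where
E_N(σ) = log₂ ‖σ^{T_B}‖₁. -/
theorem negativity_physical_implementability_bound
    {a b : Type*} [Fintype a] [DecidableEq a] [Fintype b] [DecidableEq b]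
    (E Einv : Matrix (a × b) (a × b) ℂ → Matrix (a × b) (a × b) ℂ)
    (hE : ∃ (k : ℕ) (p : Fin k → ℝ)
        (TA : Fin k → (Matrix a a ℂ →ₗ[ℂ] Matrix a a ℂ))
        (TB : Fin k → (Matrix b b ℂ →ₗ[ℂ] Matrix b b ℂ)),
        (∀ i, 0 ≤ p i) ∧ (∑ i, p i = 1) ∧
        (∀ i, IsCPTP (TA i) ∧ IsCPTP (TB i)) ∧
        (∀ X, E X = ∑ i, (p i : ℂ) • prodMap (TA i) (TB i) X))
    (hinv : ∀ X, Einv (E X) = X)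
    (S : Set ℝ)
    (hS : S = {s : ℝ | ∃ (k : ℕ) (q : Fin k → ℝ)
        (TA : Fin k → (Matrix a a ℂ →ₗ[ℂ] Matrix a a ℂ))
        (TB : Fin k → (Matrix b b ℂ →ₗ[ℂ] Matrix b b ℂ)),
        (∀ i, IsCPTP (TA i) ∧ IsCPTP (TB i)) ∧
        (∀ X, Einv X = ∑ i, (q i : ℂ) • prodMap (TA i) (TB i) X) ∧
        s = ∑ i, |q i|})
    (hSne : S.Nonempty)
    (ρ₀ ρ : Matrix (a × b) (a × b) ℂ)
    (h0 : ρ₀.PosSemidef) (htr : ρ₀.trace = 1)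
    (hρ : ρ = E ρ₀) :
    Real.logb 2 (traceNorm (ptB ρ₀)) - Real.logb 2 (sInf S)
        ≤ Real.logb 2 (traceNorm (ptB ρ))
      ∧ Real.logb 2 (traceNorm (ptB ρ)) ≤ Real.logb 2 (traceNorm (ptB ρ₀)) := by
  obtain ⟨k, p, TA, TB, hp, hp_sum, hT, hE⟩ := hE
  have hρ_eq : ρ = ∑ i, (p i : ℂ) • prodMap (TA i) (TB i) ρ₀ := hρ.trans (hE ρ₀)
  have hρ_psd : ρ.PosSemidef := hρ_eq ▸ posSemidef_sum_smul_prodMap hp hT h0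
  have hupper : traceNorm (ptB ρ) ≤ traceNorm (ptB ρ₀) := by
    have h := traceNorm_ptB_sum_smul_prodMap_le p hT h0.1
    rwa [← hρ_eq, Finset.sum_congr rfl fun i _ => abs_of_nonneg (hp i), hp_sum, one_mul] at h
  have hlower (s) (hs : s ∈ S) : traceNorm (ptB ρ₀) ≤ s * traceNorm (ptB ρ) := by
    rw [hS] at hs
    obtain ⟨k', q, TA', TB', hT', hEinv, rfl⟩ := hs
    have hρ₀ : ρ₀ = ∑ i, (q i : ℂ) • prodMap (TA' i) (TB' i) ρ := by rw [← hEinv, hρ, hinv]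
    exact hρ₀ ▸ traceNorm_ptB_sum_smul_prodMap_le q hT' hρ_psd.1
  have hρ₀_pos : 0 < traceNorm (ptB ρ₀) := zero_lt_one.trans_le (one_le_traceNorm_ptB h0 htr)
  have hρ_pos : 0 < traceNorm (ptB ρ) := by
    obtain ⟨s, hs⟩ := hSne
    refine (traceNorm_nonneg _).lt_of_ne fun h => ?_
    have h' := hlower s hs
    rw [← h, mul_zero] at h'
    linarith
  exact ⟨Real.logb_sub_logb_sInf_le one_lt_two hSne hρ₀_pos hρ_pos hlower,
    Real.logb_le_logb_of_le one_lt_two hρ_pos hupper⟩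
end

section
/- Any Hermitian trace-preserving linear map N (not completely positive) on operators of a d-dimensional Hilbert space whose Choi operator has minimum eigenvalue λ_min < 0 can be written as N = (1 − λ_min d) T₁ + λ_min d T_I, where T_I is the CPTP map sending every density operator to the maximally mixed state, T_I(ρ) = Tr[ρ] I/d, and T₁ = (N − λ_min d T_I)/(1 − λ_min d); both T₁ and T_I are CPTP, so this decomposition has coefficient absolute sum 1 − 2 λ_min d, and hence the physical implementability satisfies 2^{ν(N)} ≤ 1 − 2 λ_min d. -/
open Matrix
open scoped ComplexOrder

/-- The Choi operator of a linear map on d×d matrices. -/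
def choi (d : ℕ) (N : Matrix (Fin d) (Fin d) ℂ →ₗ[ℂ] Matrix (Fin d) (Fin d) ℂ) :
    Matrix (Fin d × Fin d) (Fin d × Fin d) ℂ :=
  Matrix.of fun p q => N (Matrix.single p.1 q.1 1) p.2 q.2

/-- The completely depolarizing channel T_I(X) = (Tr X / d) I. -/
noncomputable def fullDepol (d : ℕ) :
    Matrix (Fin d) (Fin d) ℂ →ₗ[ℂ] Matrix (Fin d) (Fin d) ℂ where
  toFun X := (X.trace / d) • 1
  map_add' X Y := by simp [Matrix.trace_add, add_div, add_smul]
  map_smul' c X := by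
    simp [Matrix.trace_smul, smul_smul, mul_div_assoc]

lemma apply_eq_choi_sum {d : ℕ} (T : Matrix (Fin d) (Fin d) ℂ →ₗ[ℂ] Matrix (Fin d) (Fin d) ℂ)
    (X : Matrix (Fin d) (Fin d) ℂ) (a b : Fin d) :
    T X a b = ∑ i, ∑ j, X i j * choi d T (i, a) (j, b) := by
  conv_lhs => rw [matrix_eq_sum_single X]
  rw [map_sum, Matrix.sum_apply]
  refine Finset.sum_congr rfl fun i _ => ?_
  rw [map_sum, Matrix.sum_apply]
  refine Finset.sum_congr rfl fun j _ => ?_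
  have h : Matrix.single i j (X i j) = X i j • Matrix.single i j 1 := by
    rw [Matrix.smul_single, smul_eq_mul, mul_one]
  rw [h, LinearMap.map_smul]
  simp [choi]

lemma sum4_swap {α β γ δ : Type*} [Fintype α] [Fintype β] [Fintype γ] [Fintype δ]
    (f : α → β → γ → δ → ℂ) :
    ∑ i, ∑ j, ∑ k, ∑ l, f i j k l = ∑ k, ∑ l, ∑ i, ∑ j, f i j k l := by
  rw [← Fintype.sum_prod_type' (f := fun i j => ∑ k, ∑ l, f i j k l),
      ← Fintype.sum_prod_type' (f := fun k l => ∑ i, ∑ j, f i j k l)]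
  rw [show (∑ p : α × β, ∑ k, ∑ l, f p.1 p.2 k l)
      = ∑ p : α × β, ∑ q : γ × δ, f p.1 p.2 q.1 q.2 from
    Finset.sum_congr rfl fun p _ => (Fintype.sum_prod_type' (f := fun k l => f p.1 p.2 k l)).symm]
  rw [show (∑ q : γ × δ, ∑ i, ∑ j, f i j q.1 q.2)
      = ∑ q : γ × δ, ∑ p : α × β, f p.1 p.2 q.1 q.2 from
    Finset.sum_congr rfl fun q _ => (Fintype.sum_prod_type' (f := fun i j => f i j q.1 q.2)).symm]
  exact Finset.sum_comm

lemma cp_of_choi_psd {d : ℕ} (T : Matrix (Fin d) (Fin d) ℂ →ₗ[ℂ] Matrix (Fin d) (Fin d) ℂ)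
    (h : (choi d T).PosSemidef) (m : ℕ) (M : Matrix (Fin m × Fin d) (Fin m × Fin d) ℂ)
    (hM : M.PosSemidef) : (matExt T M).PosSemidef := by
  obtain ⟨A, hA⟩ : ∃ A : Matrix (Fin m × Fin d) (Fin m × Fin d) ℂ, M = Aᴴ * A := by
    open scoped MatrixOrder Matrix.Norms.L2Operator in
    exact CStarAlgebra.nonneg_iff_eq_star_mul_self.mp hM.nonneg
  obtain ⟨B, hB⟩ : ∃ B : Matrix (Fin d × Fin d) (Fin d × Fin d) ℂ, choi d T = Bᴴ * B := by
    open scoped MatrixOrder Matrix.Norms.L2Operator in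
    exact CStarAlgebra.nonneg_iff_eq_star_mul_self.mp h.nonneg
  set C : Matrix ((Fin m × Fin d) × (Fin d × Fin d)) (Fin m × Fin d) ℂ :=
    Matrix.of fun kl q => ∑ j, A kl.1 (q.1, j) * B kl.2 (j, q.2) with hC
  have key : matExt T M = Cᴴ * C := by
    ext p q
    show T (Matrix.of fun a b => M (p.1, a) (q.1, b)) p.2 q.2 = (Cᴴ * C) p q
    rw [apply_eq_choi_sum]
    have hM' : ∀ i j, M (p.1, i) (q.1, j)
        = ∑ k, (starRingEnd ℂ) (A k (p.1, i)) * A k (q.1, j) := by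
      intro i j; rw [hA]; simp [Matrix.mul_apply, Matrix.conjTranspose_apply]
    have hB' : ∀ i j, choi d T (i, p.2) (j, q.2)
        = ∑ l, (starRingEnd ℂ) (B l (i, p.2)) * B l (j, q.2) := by
      intro i j; rw [hB]; simp [Matrix.mul_apply, Matrix.conjTranspose_apply]
    simp only [Matrix.of_apply, hM', hB', Matrix.mul_apply, Matrix.conjTranspose_apply,
      hC, star_sum, star_mul', Finset.sum_mul_sum, RCLike.star_def]
    rw [Fintype.sum_prod_type]
    rw [sum4_swap]
    refine Finset.sum_congr rfl fun k _ => Finset.sum_congr rfl fun l _ =>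
      Finset.sum_congr rfl fun i _ => Finset.sum_congr rfl fun j _ => ?_
    ring
  rw [key]
  exact Matrix.posSemidef_conjTranspose_mul_self C

lemma choi_fullDepol (d : ℕ) : choi d (fullDepol d) = ((d : ℂ)⁻¹) • 1 := by
  ext p q
  simp only [choi, fullDepol, Matrix.of_apply, LinearMap.coe_mk, AddHom.coe_mk,
    Matrix.smul_apply, Matrix.one_apply, smul_eq_mul]
  rcases p with ⟨p1, p2⟩; rcases q with ⟨q1, q2⟩
  have htr : (Matrix.single p1 q1 (1:ℂ)).trace = if p1 = q1 then 1 else 0 := by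
    by_cases h : p1 = q1
    · subst h
      rw [if_pos rfl]
      rw [Matrix.trace_single_eq_same]
    · rw [if_neg h, Matrix.trace_single_eq_of_ne _ _ _ h]
  rw [htr]
  by_cases h1 : p1 = q1 <;> by_cases h2 : p2 = q2 <;>
    simp [h1, h2, Prod.ext_iff, div_eq_inv_mul]

lemma psd_real_smul {n : Type*} [Fintype n] {M : Matrix n n ℂ} (hM : M.PosSemidef)
    {r : ℝ} (hr : 0 ≤ r) : ((r : ℂ) • M).PosSemidef := by
  refine Matrix.PosSemidef.of_dotProduct_mulVec_nonneg ?_ ?_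
  · unfold Matrix.IsHermitian
    rw [Matrix.conjTranspose_smul, hM.1.eq]
    congr 1
    simp [RCLike.star_def, Complex.conj_ofReal]
  · intro x
    rw [Matrix.smul_mulVec, dotProduct_smul, smul_eq_mul]
    exact mul_nonneg (by exact_mod_cast hr) (hM.dotProduct_mulVec_nonneg x)

lemma sub_smul_one_psd {n : Type*} [Fintype n] [DecidableEq n] {A : Matrix n n ℂ}
    (hA : A.IsHermitian) {c : ℝ} (h : ∀ i, c ≤ hA.eigenvalues i) :
    (A - (c : ℂ) • 1).PosSemidef := by
  have hU : (hA.eigenvectorUnitary : Matrix n n ℂ) * (star hA.eigenvectorUnitary : Matrix n n ℂ) = 1 :=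
    Matrix.mem_unitaryGroup_iff.mp hA.eigenvectorUnitary.2
  have hrepr : A - (c : ℂ) • 1
      = (hA.eigenvectorUnitary : Matrix n n ℂ)
        * Matrix.diagonal (fun i => ((hA.eigenvalues i - c : ℝ) : ℂ))
        * (star hA.eigenvectorUnitary : Matrix n n ℂ) := by
    have hdiag : Matrix.diagonal (fun i => ((hA.eigenvalues i - c : ℝ) : ℂ))
        = Matrix.diagonal ((RCLike.ofReal ∘ hA.eigenvalues : n → ℂ)) - (c : ℂ) • 1 := by
      ext i j
      by_cases h : i = j <;>
        simp [Matrix.diagonal, h, Matrix.one_apply, Complex.ofReal_sub]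
    rw [hdiag, Matrix.mul_sub, Matrix.sub_mul, ← Unitary.conjStarAlgAut_apply (S := ℂ), ← hA.spectral_theorem]
    congr 1
    rw [Matrix.mul_smul, Matrix.smul_mul, mul_one, hU]
  rw [hrepr]
  have hpsd : (Matrix.diagonal (fun i => ((hA.eigenvalues i - c : ℝ) : ℂ))).PosSemidef := by
    refine Matrix.posSemidef_diagonal_iff.mpr fun i => ?_
    rw [Complex.zero_le_real]
    linarith [h i]
  have := hpsd.mul_mul_conjTranspose_same (hA.eigenvectorUnitary : Matrix n n ℂ)
  simpa [Matrix.star_eq_conjTranspose] using this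

/-- a Hermitian-preserving trace-preserving map N whose Choi operator has
minimum eigenvalue λ_min < 0 decomposes as N = (1 − λ_min d) T₁ + (λ_min d) T_I with
T₁ and the completely depolarizing map T_I both CPTP; hence the physical implementability
satisfies 2^{ν(N)} = inf{Σ|qᵢ|} ≤ 1 − 2 λ_min d. -/
theorem hptp_decomposition_bound (d : ℕ) (hd : 0 < d)
    (N : Matrix (Fin d) (Fin d) ℂ →ₗ[ℂ] Matrix (Fin d) (Fin d) ℂ)
    (hTP : ∀ X : Matrix (Fin d) (Fin d) ℂ, (N X).trace = X.trace)
    (hHP : ∀ X : Matrix (Fin d) (Fin d) ℂ, X.IsHermitian → (N X).IsHermitian)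
    (hNotCP : ¬ (choi d N).PosSemidef)
    (hH : (choi d N).IsHermitian)
    (lmin : ℝ)
    (hmin : ∀ i, lmin ≤ hH.eigenvalues i)
    (hatt : ∃ i, hH.eigenvalues i = lmin)
    (hlneg : lmin < 0) :
    IsCPTP (fullDepol d)
      ∧ (∃ T₁, IsCPTP T₁
          ∧ N = ((1 - lmin * d : ℝ) : ℂ) • T₁ + ((lmin * d : ℝ) : ℂ) • fullDepol d)
      ∧ sInf {s : ℝ | ∃ (k : ℕ) (q : Fin k → ℝ)
            (T : Fin k → (Matrix (Fin d) (Fin d) ℂ →ₗ[ℂ] Matrix (Fin d) (Fin d) ℂ)),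
            (∀ i, IsCPTP (T i))
            ∧ (∀ X, N X = ∑ i, (q i : ℂ) • T i X)
            ∧ s = ∑ i, |q i|}
          ≤ 1 - 2 * lmin * d := by
  have hdR : (0 : ℝ) < d := by exact_mod_cast hd
  have hdC : (d : ℂ) ≠ 0 := by exact_mod_cast hd.ne'
  -- fullDepol is trace preserving
  have hTPdep : ∀ X : Matrix (Fin d) (Fin d) ℂ, ((fullDepol d) X).trace = X.trace := by
    intro X
    show ((X.trace / d) • (1 : Matrix (Fin d) (Fin d) ℂ)).trace = X.trace
    rw [Matrix.trace_smul, Matrix.trace_one, smul_eq_mul]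
    simp only [Fintype.card_fin]
    field_simp
  -- fullDepol is CPTP
  have hCPdep : IsCPTP (fullDepol d) := by
    refine ⟨hTPdep, fun m M hM => cp_of_choi_psd _ ?_ m M hM⟩
    rw [choi_fullDepol]
    have h1 : (((d : ℝ)⁻¹ : ℝ) : ℂ) • (1 : Matrix (Fin d × Fin d) (Fin d × Fin d) ℂ)
        = ((d : ℂ)⁻¹) • 1 := by push_cast; rfl
    rw [← h1]
    exact psd_real_smul Matrix.PosSemidef.one (by positivity)
  -- the positive coefficient
  have hc₁pos : (0 : ℝ) < 1 - lmin * d := by nlinarith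
  have hc₁ne : ((1 - lmin * d : ℝ) : ℂ) ≠ 0 := by
    exact_mod_cast Complex.ofReal_ne_zero.mpr hc₁pos.ne'
  -- define T₁
  set a : ℂ := ((lmin * d : ℝ) : ℂ) with ha
  set c : ℂ := ((1 - lmin * d : ℝ) : ℂ) with hc
  set T₁ : Matrix (Fin d) (Fin d) ℂ →ₗ[ℂ] Matrix (Fin d) (Fin d) ℂ :=
    c⁻¹ • (N - a • fullDepol d) with hT₁
  -- Choi of T₁
  have hchoiT₁ : choi d T₁ = c⁻¹ • (choi d N - (lmin : ℂ) • 1) := by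
    have h1 : choi d T₁ = c⁻¹ • (choi d N - a • choi d (fullDepol d)) := by
      ext p q
      simp [choi, hT₁, LinearMap.sub_apply, LinearMap.smul_apply, Matrix.smul_apply,
        Matrix.sub_apply]
    rw [h1, choi_fullDepol, smul_smul]
    congr 2
    rw [ha]
    push_cast
    field_simp
  have hchoiT₁psd : (choi d T₁).PosSemidef := by
    rw [hchoiT₁]
    have h2 : c⁻¹ = (((1 - lmin * d)⁻¹ : ℝ) : ℂ) := by rw [hc]; push_cast; ring
    rw [h2]
    exact psd_real_smul (sub_smul_one_psd hH hmin) (by positivity)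
  -- T₁ is trace preserving
  have hTPT₁ : ∀ X : Matrix (Fin d) (Fin d) ℂ, (T₁ X).trace = X.trace := by
    intro X
    rw [hT₁]
    simp only [LinearMap.smul_apply, LinearMap.sub_apply, Matrix.trace_smul, Matrix.trace_sub,
      hTP, hTPdep, smul_eq_mul]
    have : X.trace - a * X.trace = c * X.trace := by
      rw [ha, hc]; push_cast; ring
    rw [this, ← mul_assoc, inv_mul_cancel₀ hc₁ne, one_mul]
  have hT₁cptp : IsCPTP T₁ := ⟨hTPT₁, fun m M hM => cp_of_choi_psd _ hchoiT₁psd m M hM⟩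
  -- the decomposition
  have hdecomp : N = c • T₁ + a • fullDepol d := by
    rw [hT₁, smul_smul, mul_inv_cancel₀ hc₁ne, one_smul]
    abel
  refine ⟨hCPdep, ⟨T₁, hT₁cptp, hdecomp⟩, ?_⟩
  -- the sInf bound
  have hbdd : BddBelow {s : ℝ | ∃ (k : ℕ) (q : Fin k → ℝ)
      (T : Fin k → (Matrix (Fin d) (Fin d) ℂ →ₗ[ℂ] Matrix (Fin d) (Fin d) ℂ)),
      (∀ i, IsCPTP (T i)) ∧ (∀ X, N X = ∑ i, (q i : ℂ) • T i X) ∧ s = ∑ i, |q i|} := by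
    refine ⟨0, fun s hs => ?_⟩
    obtain ⟨k, q, T, _, _, hs⟩ := hs
    rw [hs]
    exact Finset.sum_nonneg fun i _ => abs_nonneg _
  have hmem : (1 - 2 * lmin * d) ∈ {s : ℝ | ∃ (k : ℕ) (q : Fin k → ℝ)
      (T : Fin k → (Matrix (Fin d) (Fin d) ℂ →ₗ[ℂ] Matrix (Fin d) (Fin d) ℂ)),
      (∀ i, IsCPTP (T i)) ∧ (∀ X, N X = ∑ i, (q i : ℂ) • T i X) ∧ s = ∑ i, |q i|} := by
    refine ⟨2, ![1 - lmin * d, lmin * d], ![T₁, fullDepol d], ?_, ?_, ?_⟩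
    · intro i
      fin_cases i
      · exact hT₁cptp
      · exact hCPdep
    · intro X
      rw [Fin.sum_univ_two]
      simp only [Matrix.cons_val_zero, Matrix.cons_val_one, Matrix.head_cons]
      rw [show ((1 - lmin * (d:ℝ) : ℝ) : ℂ) = c from hc.symm,
        show ((lmin * (d:ℝ) : ℝ) : ℂ) = a from ha.symm, hdecomp]
      rfl
    · rw [Fin.sum_univ_two]
      simp only [Matrix.cons_val_zero, Matrix.cons_val_one, Matrix.head_cons]
      rw [abs_of_pos hc₁pos, abs_of_neg (mul_neg_of_neg_of_pos hlneg hdR)]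
      ring
  exact csInf_le hbdd hmem
end
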